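/- arXiv:2509.21604 — 4 statements merged into one kernel-verified Lean document; each statement's English description precedes it below -/
import Mathlib

section
/- Let $p < d - q$. Then there exists a constant $C$ such that for every $\delta \in (0, 1/2]$, $\int_{\Sigma_0 \cap B_\delta} |x|^{-p}\, d\mathcal{H}^{d-1}(x) \leq C\, \delta^{\,d - q - p}$, where $B_\delta \subset \mathbb{R}^d$ is the ball of radius $\delta$ centered at the origin. -/
/-!
Near a point `y` where `∇Ω` is large compared with its variation on `closedBall y ρ`, the chords
of the zero set of `Ω` make an angle of at least 60° with `∇Ω y`, so the orthogonal projection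
onto `(∇Ω y)ᗮ` shrinks their lengths by at most a factor `2`; hence the zero set has
`(d-1)`-dimensional measure `O(ρ^(d-1))` in that ball. On the shell `r/2 ≤ ‖x‖ ≤ r` we have
`‖∇Ω‖ ≳ r^q` while `∇Ω` is Lipschitz, so balls of radius `ρ ≈ r^q` qualify, and a volume-packing
argument shows that `O((r/ρ)^d)` of them cover the shell. This gives measure
`O(r^d / ρ) = O(r^(d-q))` per shell, and summing `r^(-p) · r^(d-q)` over the dyadic shells
`r = δ 2^(-n)` is a convergent geometric series when `p < d - q`.
-/

open MeasureTheory Metric Real Set Module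

open scoped ENNReal NNReal InnerProductSpace

theorem hausdorffMeasure_le_of_dist_le_mul {X Y : Type*} [MetricSpace X] [MeasurableSpace X]
    [BorelSpace X] [MetricSpace Y] [MeasurableSpace Y] [BorelSpace Y] {f : X → Y} {s : Set X}
    {K : ℝ≥0} (hf : ∀ x ∈ s, ∀ y ∈ s, dist x y ≤ K * dist (f x) (f y)) {m : ℝ} (hm : 0 ≤ m) :
    μH[m] s ≤ (K : ℝ≥0∞) ^ m * μH[m] (f '' s) := by
  have := (AntilipschitzWith.of_le_mul_dist (f := s.domRestrict f)
    fun x y => hf x x.2 y y.2).le_hausdorffMeasure_image hm univ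
  rwa [image_univ, range_domRestrict, ← isometry_subtype_coe.hausdorffMeasure_image (Or.inl hm),
    image_univ, Subtype.range_coe] at this

section Packing

variable {E : Type*} [NormedAddCommGroup E] [MeasurableSpace E] [BorelSpace E]
  (μ : Measure E) [μ.IsAddHaarMeasure]

theorem Metric.IsSeparated.encard_mul_measure_ball_le {C : Set E} {ε : ℝ≥0}
    (hC : IsSeparated ε C) {x : E} {R : ℝ} (hCR : C ⊆ closedBall x R) :
    (C.encard : ℝ≥0∞) * μ (ball 0 (ε / 2)) ≤ μ (closedBall x (R + ε)) := by
  have hdisj : Pairwise (Function.onFun Disjoint fun y : C => ball (y : E) (ε / 2)) := by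
    intro y z hyz
    refine ball_disjoint_ball ?_
    have : (ε : ℝ≥0∞) < edist (y : E) z := hC y.2 z.2 (Subtype.coe_ne_coe.2 hyz)
    rw [edist_nndist, ENNReal.coe_lt_coe, ← NNReal.coe_lt_coe, coe_nndist] at this
    linarith
  calc (C.encard : ℝ≥0∞) * μ (ball 0 (ε / 2)) = ∑' y : C, μ (ball (y : E) (ε / 2)) := by
        simp only [Measure.addHaar_ball_center, ENNReal.tsum_set_const]
    _ ≤ μ (⋃ y : C, ball (y : E) (ε / 2)) :=
        tsum_meas_le_meas_iUnion_of_disjoint μ (fun _ => measurableSet_ball) hdisj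
    _ ≤ μ (closedBall x (R + ε)) := by
        refine measure_mono (iUnion_subset fun y z hz => ?_)
        have := mem_closedBall.1 (hCR y.2)
        have := mem_ball.1 hz
        rw [mem_closedBall]
        linarith [dist_triangle z y x, ε.coe_nonneg]

theorem Metric.packingNumber_mul_measure_ball_le {A : Set E} {x : E} {R : ℝ}
    (hA : A ⊆ closedBall x R) (ε : ℝ≥0) :
    (packingNumber ε A : ℝ≥0∞) * μ (ball 0 (ε / 2)) ≤ μ (closedBall x (R + ε)) := by
  simp only [packingNumber, ENat.toENNReal_iSup, ENNReal.iSup_mul, iSup_le_iff]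
  exact fun C hCA hC => hC.encard_mul_measure_ball_le μ (hCA.trans hA)

theorem Metric.exists_isCover_encard_mul_measure_ball_le [NormedSpace ℝ E]
    [FiniteDimensional ℝ E] {A : Set E} {x : E} {R : ℝ} (hA : A ⊆ closedBall x R) {ε : ℝ≥0}
    (hε : 0 < ε) :
    ∃ t ⊆ A, t.Finite ∧ IsCover ε A t ∧
      (t.encard : ℝ≥0∞) * μ (ball 0 (ε / 2)) ≤ μ (closedBall x (R + ε)) := by
  have hfin : packingNumber ε A ≠ ⊤ := by
    intro htop
    have := packingNumber_mul_measure_ball_le μ hA ε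
    rw [htop, ENat.toENNReal_top, ENNReal.top_mul (measure_ball_pos μ _ (by positivity)).ne',
      top_le_iff] at this
    exact measure_closedBall_lt_top.ne this
  refine ⟨maximalSeparatedSet ε A, maximalSeparatedSet_subset, ?_,
    isCover_maximalSeparatedSet hfin, isSeparated_maximalSeparatedSet.encard_mul_measure_ball_le μ
      (maximalSeparatedSet_subset.trans hA)⟩
  rw [← Set.encard_ne_top_iff, encard_maximalSeparatedSet hfin]
  exact hfin

end Packing

theorem Metric.exists_closedBall_cover_encard_le {E : Type*}
    [NormedAddCommGroup E] [NormedSpace ℝ E] [FiniteDimensional ℝ E] {A : Set E} {x : E}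
    {R ρ : ℝ} (hA : A ⊆ closedBall x R) (hρ : 0 < ρ) (hρR : ρ ≤ R) :
    ∃ t ⊆ A, t.Finite ∧ A ⊆ ⋃ y ∈ t, closedBall y ρ ∧
      (t.encard : ℝ≥0∞) ≤ ENNReal.ofReal ((4 * R / ρ) ^ finrank ℝ E) := by
  borelize E
  obtain ⟨t, htA, htfin, htcover, htcard⟩ :=
    exists_isCover_encard_mul_measure_ball_le μH[finrank ℝ E] hA (Real.toNNReal_pos.2 hρ)
  rw [isCover_iff_subset_iUnion_closedBall, Real.coe_toNNReal _ hρ.le] at htcover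
  rw [Real.coe_toNNReal _ hρ.le, Measure.addHaar_ball_of_pos _ _ (by positivity),
    Measure.addHaar_closedBall _ _ (by linarith), ← mul_assoc,
    ENNReal.mul_le_mul_iff_left (measure_ball_pos _ _ one_pos).ne' measure_ball_lt_top.ne,
    ← ENNReal.le_div_iff_mul_le (.inl (ENNReal.ofReal_pos.2 (by positivity)).ne')
      (.inl ENNReal.ofReal_ne_top),
    ← ENNReal.ofReal_div_of_pos (by positivity), ← div_pow] at htcard
  refine ⟨t, htA, htfin, htcover, htcard.trans (ENNReal.ofReal_le_ofReal ?_)⟩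
  refine pow_le_pow_left₀ (div_nonneg (by linarith) (by positivity)) ?_ _
  rw [div_le_div_iff₀ (by positivity) hρ]
  nlinarith

section InnerProductSpace

variable {E : Type*} [NormedAddCommGroup E] [InnerProductSpace ℝ E]

theorem norm_le_two_mul_norm_starProjection_orthogonal {v u : E} (hv : v ≠ 0)
    (hu : |⟪v, u⟫_ℝ| ≤ ‖v‖ / 2 * ‖u‖) : ‖u‖ ≤ 2 * ‖(ℝ ∙ v)ᗮ.starProjection u‖ := by
  have hv' : 0 < ‖v‖ := norm_pos_iff.2 hv
  have hpar : ‖(ℝ ∙ v).starProjection u‖ ≤ ‖u‖ / 2 := by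
    rw [Submodule.starProjection_singleton, RCLike.ofReal_real_eq_id, id, norm_smul,
      Real.norm_eq_abs, abs_div, abs_of_pos (pow_pos hv' 2), div_mul_eq_mul_div,
      div_le_iff₀ (pow_pos hv' 2)]
    nlinarith [mul_le_mul_of_nonneg_right hu hv'.le]
  have := norm_add_le ((ℝ ∙ v).starProjection u) ((ℝ ∙ v)ᗮ.starProjection u)
  rw [Submodule.starProjection_add_starProjection_orthogonal] at this
  linarith

theorem abs_inner_gradient_sub_le [CompleteSpace E] {Ω : E → ℝ} (hΩ : Differentiable ℝ Ω)
    {s : Set E} (hs : Convex ℝ s) {x₀ : E} {ε : ℝ}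
    (hvar : ∀ x ∈ s, ‖gradient Ω x - gradient Ω x₀‖ ≤ ε) {z w : E} (hz : z ∈ s) (hw : w ∈ s)
    (hzw : Ω z = Ω w) : |⟪gradient Ω x₀, z - w⟫_ℝ| ≤ ε * ‖z - w‖ := by
  set g : E → ℝ := fun y => Ω y - ⟪gradient Ω x₀, y⟫_ℝ
  have hg : ∀ x ∈ s, HasFDerivWithinAt g
      (InnerProductSpace.toDual ℝ E (gradient Ω x - gradient Ω x₀)) s x := by
    intro x _
    rw [map_sub]
    exact ((hΩ x).hasGradientAt.hasFDerivAt.sub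
      (InnerProductSpace.toDual ℝ E (gradient Ω x₀)).hasFDerivAt).hasFDerivWithinAt
  have := hs.norm_image_sub_le_of_norm_hasFDerivWithin_le hg
    (fun x hx => by rw [LinearIsometryEquiv.norm_map]; exact hvar x hx) hw hz
  rwa [show g z - g w = -⟪gradient Ω x₀, z - w⟫_ℝ by simp [g, hzw, inner_sub_right],
    norm_neg, Real.norm_eq_abs] at this

theorem ContDiff.exists_lipschitzOnWith_gradient [CompleteSpace E] {Ω : E → ℝ}
    (hΩ : ContDiff ℝ 2 Ω) {s : Set E} (hs : IsCompact s) :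
    ∃ K, LipschitzOnWith K (gradient Ω) s := by
  obtain ⟨K, hK⟩ := (hΩ.fderiv_right (m := 1) (by norm_num)).locallyLipschitz.locallyLipschitzOn
    |>.exists_lipschitzOnWith_of_compact hs
  refine ⟨K, ?_⟩
  have := (InnerProductSpace.toDual ℝ E).symm.lipschitz.comp_lipschitzOnWith hK
  rwa [one_mul] at this

variable [FiniteDimensional ℝ E] [MeasurableSpace E] [BorelSpace E]

theorem hausdorffMeasure_le_of_abs_inner_sub_le {m : ℕ} (hE : finrank ℝ E = m + 1) {v : E}
    (hv : v ≠ 0) {s : Set E} {x₀ : E} {ρ : ℝ} (hs : s ⊆ closedBall x₀ ρ)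
    (hcone : ∀ z ∈ s, ∀ w ∈ s, |⟪v, z - w⟫_ℝ| ≤ ‖v‖ / 2 * ‖z - w‖) :
    μH[m] s ≤ 2 ^ m * μH[m] (closedBall (0 : EuclideanSpace ℝ (Fin m)) ρ) := by
  have : Fact (finrank ℝ E = m + 1) := ⟨hE⟩
  set P := (ℝ ∙ v)ᗮ
  let e : P ≃ₗᵢ[ℝ] EuclideanSpace ℝ (Fin m) :=
    ((stdOrthonormalBasis ℝ P).reindex
      (finCongr (Submodule.finrank_orthogonal_span_singleton hv))).repr
  let F : E → EuclideanSpace ℝ (Fin m) := fun u => e (P.orthogonalProjectionOnto u)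
  have hdist : ∀ z w, dist (F z) (F w) = ‖P.starProjection (z - w)‖ := by
    intro z w
    rw [dist_eq_norm, ← map_sub, ← map_sub, LinearIsometryEquiv.norm_map,
      Submodule.starProjection_apply, Submodule.norm_coe]
  have hF : ∀ z ∈ s, ∀ w ∈ s, dist z w ≤ (2 : ℝ≥0) * dist (F z) (F w) := by
    intro z hz w hw
    rw [hdist, dist_eq_norm]
    exact norm_le_two_mul_norm_starProjection_orthogonal hv (hcone z hz w hw)
  have himage : F '' s ⊆ closedBall (F x₀) ρ := by
    rintro _ ⟨z, hz, rfl⟩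
    rw [mem_closedBall, hdist]
    exact (P.norm_starProjection_apply_le _).trans (mem_closedBall_iff_norm.1 (hs hz))
  calc μH[m] s ≤ (2 : ℝ≥0) ^ (m : ℝ) * μH[m] (F '' s) :=
        hausdorffMeasure_le_of_dist_le_mul hF m.cast_nonneg
    _ ≤ 2 ^ m * μH[m] (closedBall (F x₀) ρ) := by
        rw [ENNReal.rpow_natCast, ENNReal.coe_ofNat]
        gcongr
    _ = 2 ^ m * μH[m] (closedBall (0 : EuclideanSpace ℝ (Fin m)) ρ) := by
        rw [Measure.addHaar_closedBall_center]

theorem hausdorffMeasure_setOf_eq_zero_inter_closedBall_le {m : ℕ} (hE : finrank ℝ E = m + 1)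
    {Ω : E → ℝ} (hΩ : Differentiable ℝ Ω) {x₀ : E} (hx₀ : gradient Ω x₀ ≠ 0) {ρ : ℝ}
    (hvar : ∀ x ∈ closedBall x₀ ρ, ‖gradient Ω x - gradient Ω x₀‖ ≤ ‖gradient Ω x₀‖ / 2) :
    μH[m] ({x | Ω x = 0} ∩ closedBall x₀ ρ) ≤
      2 ^ m * μH[m] (closedBall (0 : EuclideanSpace ℝ (Fin m)) ρ) :=
  hausdorffMeasure_le_of_abs_inner_sub_le hE hx₀ inter_subset_right fun _ hz _ hw =>
    abs_inner_gradient_sub_le hΩ (convex_closedBall x₀ ρ) hvar hz.2 hw.2 (hz.1.trans hw.1.symm)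

theorem hausdorffMeasure_le_of_lipschitzOnWith_gradient {m : ℕ} (hE : finrank ℝ E = m + 1)
    {Ω : E → ℝ} (hΩ : Differentiable ℝ Ω) {K : ℝ≥0} {U : Set E}
    (hlip : LipschitzOnWith K (gradient Ω) U)
    {A : Set E} {x₀ : E} {R ρ : ℝ} (hρ : 0 < ρ) (hρR : ρ ≤ R) (hA : A ⊆ closedBall x₀ R)
    (hAΩ : ∀ y ∈ A, Ω y = 0) (hAU : ∀ y ∈ A, closedBall y ρ ⊆ U)
    (hAgrad : ∀ y ∈ A, 2 * K * ρ < ‖gradient Ω y‖) :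
    μH[m] A ≤ ENNReal.ofReal ((4 * R / ρ) ^ (m + 1) * ρ ^ m) *
      (2 ^ m * μH[m] (closedBall (0 : EuclideanSpace ℝ (Fin m)) 1)) := by
  have hball : ∀ y ∈ A, μH[m] ({x | Ω x = 0} ∩ closedBall y ρ) ≤
      ENNReal.ofReal (ρ ^ m) * (2 ^ m * μH[m] (closedBall (0 : EuclideanSpace ℝ (Fin m)) 1)) := by
    intro y hy
    have hvar : ∀ x ∈ closedBall y ρ, ‖gradient Ω x - gradient Ω y‖ ≤ ‖gradient Ω y‖ / 2 := by
      intro x hx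
      calc ‖gradient Ω x - gradient Ω y‖ ≤ K * ‖x - y‖ := by
            rw [← dist_eq_norm, ← dist_eq_norm]
            exact hlip.dist_le_mul x (hAU y hy hx) y (hAU y hy (mem_closedBall_self hρ.le))
        _ ≤ K * ρ := by gcongr; exact mem_closedBall_iff_norm.1 hx
        _ ≤ ‖gradient Ω y‖ / 2 := by linarith [hAgrad y hy]
    have hy : gradient Ω y ≠ 0 :=
      norm_pos_iff.1 ((mul_nonneg (by positivity) hρ.le).trans_lt (hAgrad y hy))
    calc μH[m] ({x | Ω x = 0} ∩ closedBall y ρ)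
        ≤ 2 ^ m * μH[m] (closedBall (0 : EuclideanSpace ℝ (Fin m)) ρ) :=
          hausdorffMeasure_setOf_eq_zero_inter_closedBall_le hE hΩ hy hvar
      _ = _ := by
          rw [Measure.addHaar_closedBall' _ _ hρ.le, finrank_euclideanSpace_fin]
          ring
  obtain ⟨t, htA, htfin, htcover, htcard⟩ :=
    exists_closedBall_cover_encard_le hA hρ hρR
  calc μH[m] A ≤ μH[m] (⋃ y ∈ t, {x | Ω x = 0} ∩ closedBall y ρ) := by
        refine measure_mono fun x hx => ?_
        obtain ⟨y, hyt, hxy⟩ := mem_iUnion₂.1 (htcover hx)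
        exact mem_iUnion₂.2 ⟨y, hyt, hAΩ x hx, hxy⟩
    _ ≤ ∑' y : t, μH[m] ({x | Ω x = 0} ∩ closedBall y ρ) := measure_biUnion_le _ htfin.countable _
    _ ≤ ∑' _ : t, ENNReal.ofReal (ρ ^ m) *
          (2 ^ m * μH[m] (closedBall (0 : EuclideanSpace ℝ (Fin m)) 1)) :=
        ENNReal.tsum_le_tsum fun y => hball y (htA y.2)
    _ ≤ _ := by
        rw [ENNReal.tsum_set_const, ← mul_assoc,
          ENNReal.ofReal_mul (pow_nonneg (div_nonneg (by linarith) hρ.le) _), ← hE]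
        gcongr

theorem hausdorffMeasure_sep_eq_zero_inter_shell_le {m : ℕ} (hE : finrank ℝ E = m + 1)
    {Ω : E → ℝ} (hΩ : Differentiable ℝ Ω) {K : ℝ≥0}
    (hlip : LipschitzOnWith K (gradient Ω) (closedBall 0 1)) {D : Set E} {c q : ℝ}
    (hc : 0 < c) (hq : 1 ≤ q) (hgrad : ∀ x ∈ D, c * ‖x‖ ^ q ≤ ‖gradient Ω x‖) :
    ∃ C > 0, ∀ r, 0 < r → r ≤ 1 / 2 →
      μH[m] ({x ∈ D | Ω x = 0} ∩ (closedBall 0 r \ ball 0 (r / 2))) ≤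
        ENNReal.ofReal (C * r ^ ((m : ℝ) + 1 - q)) := by
  set a : ℝ := min 1 (c / (2 ^ (q + 1) * (K + 1)))
  set B := μH[m] (closedBall (0 : EuclideanSpace ℝ (Fin m)) 1) with hB_def
  have ha : 0 < a := lt_min one_pos (by positivity)
  have hBtop : B ≠ ⊤ := measure_closedBall_lt_top.ne
  have hB : 0 < B.toReal := ENNReal.toReal_pos (measure_closedBall_pos _ _ one_pos).ne' hBtop
  refine ⟨4 ^ (m + 1) * 2 ^ m * B.toReal / a, by positivity, fun r hr hr' => ?_⟩
  -- `ρ = a r^q` is small enough that `2Kρ < c (r/2)^q ≤ ‖∇Ω‖` on the shell, and `ρ ≤ r` as `q ≥ 1`.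
  set ρ := a * r ^ q with hρ_def
  have hρ : 0 < ρ := by positivity
  have hρr : ρ ≤ r := (mul_le_of_le_one_left (by positivity) (min_le_left _ _)).trans
    (rpow_le_self_of_le_one hr.le (by linarith) hq)
  have hKρ : 2 * K * ρ < c * (r / 2) ^ q := calc
    2 * K * ρ ≤ 2 * (K : ℝ) * (c / (2 ^ (q + 1) * (K + 1)) * r ^ q) := by
      gcongr; exact mul_le_mul_of_nonneg_right (min_le_right _ _) (by positivity)
    _ = K / (K + 1) * (c * (r / 2) ^ q) := by
      rw [div_rpow hr.le zero_le_two, rpow_add two_pos, rpow_one]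
      field_simp
    _ < c * (r / 2) ^ q :=
      mul_lt_of_lt_one_left (by positivity) (by rw [div_lt_one (by positivity)]; linarith)
  have hA := hausdorffMeasure_le_of_lipschitzOnWith_gradient hE hΩ hlip
    (A := {x ∈ D | Ω x = 0} ∩ (closedBall 0 r \ ball 0 (r / 2))) hρ hρr
    (fun y hy => hy.2.1) (fun y hy => hy.1.2)
    (fun y hy => closedBall_subset_closedBall' (by
      rw [dist_zero_right]; linarith [mem_closedBall_zero_iff.1 hy.2.1]))
    (fun y hy => hKρ.trans_le <| (mul_le_mul_of_nonneg_left (rpow_le_rpow (by positivity)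
      (by simpa using hy.2.2) (by linarith)) hc.le).trans (hgrad y hy.1.1))
  rw [← hB_def, ← ENNReal.ofReal_toReal hBtop, ← ENNReal.ofReal_ofNat 2,
    ← ENNReal.ofReal_pow zero_le_two] at hA
  refine hA.trans_eq ?_
  rw [← ENNReal.ofReal_mul (by positivity), ← ENNReal.ofReal_mul (by positivity), rpow_sub hr,
    rpow_add hr, rpow_one, rpow_natCast, hρ_def, div_pow, mul_pow, mul_pow]
  have : 0 < r ^ q := by positivity
  congr 1
  field_simp
  ring

end InnerProductSpace

theorem rpow_neg_le_two_rpow_abs_mul {t r : ℝ} (p : ℝ) (hr : 0 < r) (hrt : r / 2 ≤ t)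
    (htr : t ≤ r) : t ^ (-p) ≤ 2 ^ |p| * r ^ (-p) := by
  rcases le_or_gt 0 p with hp | hp
  · calc t ^ (-p) ≤ (r / 2) ^ (-p) :=
          rpow_le_rpow_of_nonpos (by positivity) hrt (by linarith)
      _ = 2 ^ |p| * r ^ (-p) := by
          rw [div_rpow hr.le zero_le_two, rpow_neg zero_le_two, abs_of_nonneg hp, div_inv_eq_mul,
            mul_comm]
  · calc t ^ (-p) ≤ r ^ (-p) := rpow_le_rpow (by linarith) htr (by linarith)
      _ ≤ 2 ^ |p| * r ^ (-p) :=
          le_mul_of_one_le_left (by positivity) (one_le_rpow one_le_two (abs_nonneg p))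

theorem ball_zero_diff_zero_subset_iUnion_shell {E : Type*} [NormedAddCommGroup E] (δ : ℝ) :
    ball (0 : E) δ \ {0} ⊆ ⋃ n : ℕ, closedBall 0 (δ / 2 ^ n) \ ball 0 (δ / 2 ^ n / 2) := by
  rintro x ⟨hxδ, hx0⟩
  have hx : 0 < ‖x‖ := norm_pos_iff.2 hx0
  obtain ⟨n, hn, hn'⟩ :=
    exists_nat_pow_near ((one_le_div hx).2 (mem_ball_zero_iff.1 hxδ).le) one_lt_two
  refine mem_iUnion.2 ⟨n, mem_closedBall_zero_iff.2 ((le_div_comm₀ (by positivity) hx).1 hn),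
    fun hxn => ?_⟩
  rw [mem_ball_zero_iff, div_div, ← pow_succ, lt_div_iff₀ (by positivity)] at hxn
  rw [div_lt_iff₀ hx] at hn'
  linarith

theorem setLIntegral_rpow_neg_norm_le {E : Type*} [NormedAddCommGroup E] [MeasurableSpace E]
    (μ : Measure E) (p : ℝ) {r : ℝ} (hr : 0 < r) {T : Set E}
    (hT : T ⊆ closedBall 0 r \ ball 0 (r / 2)) :
    ∫⁻ x in T, ENNReal.ofReal (‖x‖ ^ (-p)) ∂μ ≤ ENNReal.ofReal (2 ^ |p| * r ^ (-p)) * μ T :=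
  calc ∫⁻ x in T, ENNReal.ofReal (‖x‖ ^ (-p)) ∂μ
      ≤ ∫⁻ _ in T, ENNReal.ofReal (2 ^ |p| * r ^ (-p)) ∂μ :=
        setLIntegral_mono measurable_const fun x hx => ENNReal.ofReal_le_ofReal <|
          rpow_neg_le_two_rpow_abs_mul p hr (by simpa using (hT hx).2)
            (mem_closedBall_zero_iff.1 (hT hx).1)
    _ = ENNReal.ofReal (2 ^ |p| * r ^ (-p)) * μ T := setLIntegral_const _ _

theorem lintegral_rpow_neg_norm_le {E : Type*} [NormedAddCommGroup E] [MeasurableSpace E]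
    (μ : Measure E) (S : Set E) {s p C : ℝ} (hps : p < s) (hC : 0 ≤ C)
    (hshell : ∀ r, 0 < r → r ≤ 1 / 2 →
      μ (S ∩ (closedBall 0 r \ ball 0 (r / 2))) ≤ ENNReal.ofReal (C * r ^ s))
    {δ : ℝ} (hδ : 0 < δ) (hδ' : δ ≤ 1 / 2) :
    ∫⁻ x in (S \ {0}) ∩ ball 0 δ, ENNReal.ofReal (‖x‖ ^ (-p)) ∂μ ≤
      ENNReal.ofReal (2 ^ |p| * C / (1 - 2 ^ (p - s)) * δ ^ (s - p)) := by
  set a : ℝ := 2 ^ (p - s)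
  have ha : a < 1 := rpow_lt_one_of_one_lt_of_neg one_lt_two (by linarith)
  set r : ℕ → ℝ := fun n => δ / 2 ^ n
  have hr : ∀ n, 0 < r n := fun n => by positivity
  set T : ℕ → Set E := fun n => S ∩ (closedBall 0 (r n) \ ball 0 (r n / 2))
  have hcover : (S \ {0}) ∩ ball 0 δ ⊆ ⋃ n, T n := by
    rintro x ⟨⟨hxS, hx0⟩, hxδ⟩
    obtain ⟨n, hn⟩ := mem_iUnion.1 (ball_zero_diff_zero_subset_iUnion_shell δ ⟨hxδ, hx0⟩)
    exact mem_iUnion.2 ⟨n, hxS, hn⟩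
  have hT : ∀ n, ∫⁻ x in T n, ENNReal.ofReal (‖x‖ ^ (-p)) ∂μ ≤
      ENNReal.ofReal (2 ^ |p| * C * δ ^ (s - p) * a ^ n) := by
    intro n
    have hrn : r n ^ (-p) * r n ^ s = δ ^ (s - p) * a ^ n := by
      rw [← rpow_add (hr n), div_rpow hδ.le (by positivity), ← rpow_natCast,
        ← rpow_mul zero_le_two, ← rpow_natCast, ← rpow_mul zero_le_two, div_eq_mul_inv,
        ← rpow_neg zero_le_two]
      ring_nf
    calc ∫⁻ x in T n, ENNReal.ofReal (‖x‖ ^ (-p)) ∂μ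
        ≤ ENNReal.ofReal (2 ^ |p| * r n ^ (-p)) * μ (T n) :=
          setLIntegral_rpow_neg_norm_le μ p (hr n) inter_subset_right
      _ ≤ ENNReal.ofReal (2 ^ |p| * r n ^ (-p)) * ENNReal.ofReal (C * r n ^ s) := by
          gcongr
          exact hshell _ (hr n) ((div_le_self hδ.le (one_le_pow₀ one_le_two)).trans hδ')
      _ = ENNReal.ofReal (2 ^ |p| * C * δ ^ (s - p) * a ^ n) := by
          rw [← ENNReal.ofReal_mul (by positivity)]
          congr 1
          linear_combination 2 ^ |p| * C * hrn
  calc ∫⁻ x in (S \ {0}) ∩ ball 0 δ, ENNReal.ofReal (‖x‖ ^ (-p)) ∂μ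
      ≤ ∫⁻ x in ⋃ n, T n, ENNReal.ofReal (‖x‖ ^ (-p)) ∂μ := lintegral_mono_set hcover
    _ ≤ ∑' n, ∫⁻ x in T n, ENNReal.ofReal (‖x‖ ^ (-p)) ∂μ := lintegral_iUnion_le _ _
    _ ≤ ∑' n, ENNReal.ofReal (2 ^ |p| * C * δ ^ (s - p) * a ^ n) := ENNReal.tsum_le_tsum hT
    _ = ENNReal.ofReal (∑' n, 2 ^ |p| * C * δ ^ (s - p) * a ^ n) :=
        (ENNReal.ofReal_tsum_of_nonneg (fun n => by positivity)
          ((summable_geometric_of_lt_one (by positivity) ha).mul_left _)).symm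
    _ = ENNReal.ofReal (2 ^ |p| * C / (1 - a) * δ ^ (s - p)) := by
        rw [tsum_mul_left, tsum_geometric_of_lt_one (by positivity) ha]
        ring_nf

theorem integral_over_sigma_inside_ball_general {d : ℕ} (q : ℝ) (hq : 1 ≤ q)
    (D : Set (EuclideanSpace ℝ (Fin d)))
    (Ω : EuclideanSpace ℝ (Fin d) → ℝ) (hΩ : ContDiff ℝ 5 Ω)
    (c : ℝ) (hc : 0 < c)
    (hgrad : ∀ x ∈ D, c * ‖x‖ ^ q ≤ ‖gradient Ω x‖)
    (p : ℝ) (hp : p < (d : ℝ) - q) :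
    ∃ C > 0, ∀ δ ∈ Set.Ioc (0 : ℝ) (1 / 2),
      ∫⁻ x in (({y ∈ D | Ω y = 0} \ {0}) ∩ ball 0 δ),
          ENNReal.ofReal (‖x‖ ^ (-p)) ∂(μH[(d : ℝ) - 1]) ≤
        ENNReal.ofReal (C * δ ^ ((d : ℝ) - q - p)) := by
  obtain ⟨C, hC, hshell⟩ : ∃ C > 0, ∀ r, 0 < r → r ≤ 1 / 2 →
      μH[(d : ℝ) - 1] ({x ∈ D | Ω x = 0} ∩ (closedBall 0 r \ ball 0 (r / 2))) ≤
        ENNReal.ofReal (C * r ^ ((d : ℝ) - q)) := by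
    rcases d with _ | m
    · refine ⟨1, one_pos, fun r hr _ => ?_⟩
      have : closedBall (0 : EuclideanSpace ℝ (Fin 0)) r \ ball 0 (r / 2) = ∅ :=
        eq_empty_of_forall_notMem fun x hx =>
          hx.2 (Subsingleton.elim 0 x ▸ mem_ball_self (by positivity))
      simp [this]
    · obtain ⟨K, hK⟩ := (hΩ.of_le (by norm_num)).exists_lipschitzOnWith_gradient
        (isCompact_closedBall (0 : EuclideanSpace ℝ (Fin (m + 1))) 1)
      simpa only [Nat.cast_add, Nat.cast_one, add_sub_cancel_right] using
        hausdorffMeasure_sep_eq_zero_inter_shell_le finrank_euclideanSpace_fin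
          (hΩ.differentiable (by norm_num)) hK hc hq hgrad
  have hgeom : (2 : ℝ) ^ (p - ((d : ℝ) - q)) < 1 :=
    rpow_lt_one_of_one_lt_of_neg one_lt_two (by linarith)
  exact ⟨2 ^ |p| * C / (1 - 2 ^ (p - ((d : ℝ) - q))), div_pos (by positivity) (by linarith),
    fun δ ⟨hδ, hδ'⟩ => lintegral_rpow_neg_norm_le _ _ hp hC.le hshell hδ hδ'⟩

/-- Let `p < d − q`. Then there is `C > 0` such that for every `δ ∈ (0, 1/2]`,
`∫_{Σ₀ ∩ B_δ} |x|^{-p} dH^{d-1}(x) ≤ C δ^{d−q−p}`. -/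
theorem integral_over_sigma_inside_ball {d : ℕ} (q : ℝ) (hq : 1 ≤ q)
    (D : Set (EuclideanSpace ℝ (Fin d))) (hD : IsOpen D) (hDball : D ⊆ ball 0 1)
    (Ω : EuclideanSpace ℝ (Fin d) → ℝ) (hΩ : ContDiff ℝ 5 Ω)
    (h0D : (0 : EuclideanSpace ℝ (Fin d)) ∈ D) (hΩ0 : Ω 0 = 0)
    (hcrit0 : gradient Ω 0 = 0)
    (hcrit : ∀ x ∈ D, Ω x = 0 → gradient Ω x = 0 → x = 0)
    (c : ℝ) (hc : 0 < c)
    (hgrad : ∀ x ∈ D, c * ‖x‖ ^ q ≤ ‖gradient Ω x‖)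
    (p : ℝ) (hp : p < (d : ℝ) - q) :
    ∃ C > 0, ∀ δ ∈ Set.Ioc (0 : ℝ) (1 / 2),
      ∫⁻ x in (({y ∈ D | Ω y = 0} \ {0}) ∩ ball 0 δ),
          ENNReal.ofReal (‖x‖ ^ (-p)) ∂(μH[(d : ℝ) - 1]) ≤
        ENNReal.ofReal (C * δ ^ ((d : ℝ) - q - p)) :=
  integral_over_sigma_inside_ball_general q hq D Ω hΩ c hc hgrad p hp
end

section
/- Let $s > 0$ be so small that the closed ball $B_{2s}$ of radius $2s$ centered at the origin is contained in $D$. Then there exists a constant $C > 0$ such that $|\Omega(x)| \geq C\, |x|^{2q}$ uniformly for all $x \in B_s \setminus U_\Theta(\Sigma_0)$, where $U_\Theta(\Sigma_0) := \{x_\xi + \theta\,\nabla\Omega(x_\xi) \in D : x_\xi \in \Sigma_0,\; |\theta| < \Theta\}$. -/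
/-!
Let `ρ` be the distance from `x` to the zero set of `Ω` and `ξ` a nearest zero. If `ρ < ‖x‖ / 2`,
then `ξ ≠ 0`, and by Lagrange multipliers `x = ξ + θ ∇Ω(ξ)`; as `x` lies outside the tube,
`|θ| ≥ Θ`, so `ρ = |θ| ‖∇Ω(ξ)‖ ≥ Θ c (‖x‖ / 2)^q`. On the ball around `x` of radius
`r = min (‖x‖ / 2) (Θ c (‖x‖ / 2)^q) ≤ ρ` the function `|Ω|` has no zero and a gradient of norm at
least `g = c (‖x‖ / 2)^q`. For `g' < g`, the function `|Ω| + g' dist(·, x)` cannot attain its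
minimum over the closed ball at an interior point, where its one-sided derivative in the direction
`-∇|Ω|` would be at most `g' - g < 0`; comparing the value at `x` with the value at a minimiser on
the sphere gives `|Ω(x)| ≥ g r`, which is of order `‖x‖^(2q)`.
-/

open Filter Topology Metric Set

variable {E : Type*} [NormedAddCommGroup E]

theorem norm_sign_smul_of_ne_zero [NormedSpace ℝ E] {a : ℝ} (ha : a ≠ 0) (w : E) :
    ‖(SignType.sign a : ℝ) • w‖ = ‖w‖ := by
  rcases ha.lt_or_gt with h | h <;> simp [h]

theorem mul_half_norm_rpow_le_of_mem_ball {D : Set E} {g : E → ℝ} {c q : ℝ} (hc : 0 ≤ c)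
    (hq : 0 ≤ q) (hg : ∀ y ∈ D, c * ‖y‖ ^ q ≤ g y) {x y : E} (hD : closedBall 0 (2 * ‖x‖) ⊆ D)
    (hy : y ∈ ball x (‖x‖ / 2)) : c * (‖x‖ / 2) ^ q ≤ g y := by
  rw [mem_ball, dist_eq_norm] at hy
  have h1 := norm_sub_norm_le x y
  have h2 := norm_sub_norm_le y x
  rw [norm_sub_rev] at h1
  calc c * (‖x‖ / 2) ^ q ≤ c * ‖y‖ ^ q := by gcongr; linarith
    _ ≤ g y := hg y (hD (mem_closedBall_zero_iff.mpr (by linarith)))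

theorem min_one_mul_rpow_le_min {a K q : ℝ} (ha : 0 ≤ a) (ha1 : a ≤ 1) (hq : 1 ≤ q) :
    min 1 K * a ^ q ≤ min a (K * a ^ q) := by
  have hpow := Real.rpow_nonneg ha q
  refine le_min ?_ (mul_le_mul_of_nonneg_right (min_le_right _ _) hpow)
  calc min 1 K * a ^ q ≤ 1 * a ^ q := mul_le_mul_of_nonneg_right (min_le_left _ _) hpow
    _ ≤ a := by rw [one_mul]; exact Real.rpow_le_self_of_le_one ha ha1 hq

variable [InnerProductSpace ℝ E]

theorem HasGradientAt.norm_le_of_isLocalMin_add_mul_norm_sub [CompleteSpace E] {f : E → ℝ}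
    {w z : E} {g : ℝ} (hf : HasGradientAt f w z) (hg : 0 ≤ g)
    (hmin : IsLocalMin (fun y => f y + g * ‖y - z‖) z) : ‖w‖ ≤ g := by
  set ψ : ℝ → ℝ := fun t => f (z + t • -w) + g * ‖w‖ * t
  have hψ : HasDerivAt ψ (-‖w‖ ^ 2 + g * ‖w‖) 0 := by
    have hline : HasDerivAt (fun t : ℝ => z + t • -w) (-w) 0 := by
      simpa using ((hasDerivAt_id (0 : ℝ)).smul_const (-w)).const_add z
    have hf' : HasFDerivAt f (InnerProductSpace.toDual ℝ E w) (z + (0 : ℝ) • -w) := by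
      simpa using hasGradientAt_iff_hasFDerivAt.mp hf
    refine ((hf'.comp_hasDerivAt 0 hline).add
      ((hasDerivAt_id (0 : ℝ)).const_mul (g * ‖w‖))).congr_deriv ?_
    simp
  have hψmin : IsLocalMinOn ψ (Ici 0) 0 := by
    have hline : IsLocalMin (fun t : ℝ => f (z + t • -w) + g * ‖(z + t • -w) - z‖) 0 :=
      IsLocalMin.comp_continuous (f := fun y => f y + g * ‖y - z‖) (b := (0 : ℝ))
        (g := fun t : ℝ => z + t • -w) (by simpa using hmin) (by fun_prop)
    filter_upwards [nhdsWithin_le_nhds hline, self_mem_nhdsWithin] with t ht ht0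
    simpa [ψ, norm_smul, abs_of_nonneg (show (0 : ℝ) ≤ t from ht0), mul_comm, mul_left_comm]
      using ht
  have hderiv : 0 ≤ -‖w‖ ^ 2 + g * ‖w‖ := by
    simpa using hψmin.hasFDerivWithinAt_nonneg hψ.hasDerivWithinAt.hasFDerivWithinAt
      (mem_posTangentConeAt_of_segment_subset (y := (1 : ℝ))
        (by simpa [segment_eq_Icc] using Icc_subset_Ici_self))
  nlinarith [norm_nonneg w]

theorem HasGradientAt.abs [CompleteSpace E] {f : E → ℝ} {w z : E} (hf : HasGradientAt f w z)
    (hz : f z ≠ 0) : HasGradientAt (fun y => |f y|) ((SignType.sign (f z) : ℝ) • w) z := by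
  rw [hasGradientAt_iff_hasFDerivAt, map_smulₛₗ]
  exact (hasGradientAt_iff_hasFDerivAt.mp hf).abs hz

theorem mul_le_of_forall_norm_gradient_ge [ProperSpace E] {f : E → ℝ} {x : E} {r g : ℝ}
    (hr : 0 ≤ r) (hg : 0 < g) (hcont : ContinuousOn f (closedBall x r))
    (hsphere : ∀ y ∈ sphere x r, 0 ≤ f y)
    (hgrad : ∀ y ∈ ball x r, ∃ w, HasGradientAt f w y ∧ g ≤ ‖w‖) :
    g * r ≤ f x := by
  suffices h : ∀ g' ∈ Ioo 0 g, g' * r ≤ f x by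
    have hlim : Tendsto (fun g' => g' * r) (𝓝[<] g) (𝓝 (g * r)) :=
      tendsto_nhdsWithin_of_tendsto_nhds ((continuous_mul_const r).tendsto g)
    exact le_of_tendsto hlim (eventually_of_mem (Ioo_mem_nhdsLT hg) h)
  rintro g' ⟨hg'0, hg'g⟩
  have hFcont : ContinuousOn (fun y => f y + g' * dist y x) (closedBall x r) :=
    hcont.add (by fun_prop)
  obtain ⟨z, hz, hzmin⟩ := (isCompact_closedBall x r).exists_isMinOn
    (nonempty_closedBall.mpr hr) hFcont
  rcases (mem_closedBall.mp hz).lt_or_eq with hzr | hzr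
  · obtain ⟨w, hw, hgw⟩ := hgrad z hzr
    have hloc : IsLocalMin (fun y => f y + g' * ‖y - z‖) z := by
      filter_upwards [hzmin.isLocalMin (closedBall_mem_nhds_of_mem hzr)] with y hy
      have := dist_triangle y z x
      simp only [dist_eq_norm] at this hy ⊢
      simp only [sub_self, norm_zero, mul_zero, add_zero]
      linarith [mul_le_mul_of_nonneg_left this hg'0.le]
    linarith [hw.norm_le_of_isLocalMin_add_mul_norm_sub hg'0.le hloc]
  · have := hzmin (mem_closedBall_self hr)
    simp only [mem_ofPred_eq, dist_self, mul_zero, add_zero, hzr] at this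
    linarith [hsphere z (mem_sphere.mpr hzr)]

theorem mul_le_abs_of_le_infDist [ProperSpace E] {f : E → ℝ} (hf : Differentiable ℝ f) {x : E}
    {r g : ℝ} (hr : 0 ≤ r) (hg : 0 < g) (hrZ : r ≤ infDist x {y | f y = 0})
    (hgrad : ∀ y ∈ ball x r, g ≤ ‖gradient f y‖) : g * r ≤ |f x| := by
  refine mul_le_of_forall_norm_gradient_ge (f := fun y => |f y|) hr hg
    hf.continuous.abs.continuousOn
    (fun y _ => abs_nonneg _) fun y hy => ?_
  have hfy : f y ≠ 0 := fun h0 => by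
    have := infDist_le_dist_of_mem (x := x) (show y ∈ {y | f y = 0} from h0)
    rw [mem_ball, dist_comm] at hy
    linarith
  refine ⟨_, (hf y).hasGradientAt.abs hfy, ?_⟩
  rw [norm_sign_smul_of_ne_zero hfy]
  exact hgrad y hy

theorem exists_eq_add_smul_gradient_of_isMinOn_dist [CompleteSpace E] {f : E → ℝ} {x ξ : E}
    (hf : ContDiffAt ℝ 1 f ξ) (hξ : gradient f ξ ≠ 0)
    (hmin : IsMinOn (dist x) {y | f y = f ξ} ξ) : ∃ θ : ℝ, x = ξ + θ • gradient f ξ := by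
  have hextr : IsLocalExtrOn (fun y => ‖y - x‖ ^ 2) {y | f y = f ξ} ξ := by
    refine Or.inl (IsMinOn.localize fun y hy => ?_)
    have := hmin hy
    simp only [mem_ofPred_eq, dist_comm x, dist_eq_norm] at this ⊢
    gcongr
  have hf' : HasStrictFDerivAt f (InnerProductSpace.toDual ℝ E (gradient f ξ)) ξ := by
    rw [toDual_gradient]; exact hf.hasStrictFDerivAt one_ne_zero
  have hφ' := (hasStrictFDerivAt_norm_sq (ξ - x)).comp ξ ((hasStrictFDerivAt_id ξ).sub_const x)
  obtain ⟨a, b, hab, hsum⟩ := hextr.exists_multipliers_of_hasStrictFDerivAt_1d hf' hφ'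
  have hvec : a • gradient f ξ + (2 * b) • (ξ - x) = 0 := by
    refine ext_inner_right ℝ fun v => ?_
    have := congrArg (· v) hsum
    simp only [add_apply, smul_apply, ContinuousLinearMap.comp_id,
      InnerProductSpace.toDual_apply_apply, innerSL_apply_apply, zero_apply, smul_eq_mul,
      nsmul_eq_mul, Nat.cast_ofNat] at this
    rw [inner_add_left, real_inner_smul_left, real_inner_smul_left, inner_zero_left]
    linarith
  have hb : b ≠ 0 := by
    rintro rfl
    have ha : a ≠ 0 := fun ha => hab (by simp [ha])
    simp only [mul_zero, zero_smul, add_zero, smul_eq_zero] at hvec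
    exact hvec.elim ha hξ
  have h2b : (2 * b) ≠ 0 := mul_ne_zero two_ne_zero hb
  refine ⟨a / (2 * b), ?_⟩
  calc x = ξ - (2 * b)⁻¹ • ((2 * b) • (ξ - x)) := by rw [inv_smul_smul₀ h2b]; abel
    _ = ξ + (a / (2 * b)) • gradient f ξ := by
      rw [eq_neg_of_add_eq_zero_right hvec, smul_neg, smul_smul, sub_neg_eq_add, div_eq_inv_mul]

def tubularNbhd [CompleteSpace E] (D : Set E) (Ω : E → ℝ) (Θ : ℝ) : Set E :=
  {z ∈ D | ∃ ξ ∈ ({y ∈ D | Ω y = 0} \ {0}), ∃ θ : ℝ, |θ| < Θ ∧ z = ξ + θ • gradient Ω ξ}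

theorem min_le_infDist_of_notMem_tubularNbhd [ProperSpace E] {D : Set E} {Ω : E → ℝ}
    {c q Θ : ℝ} (hΩ : ContDiff ℝ 1 Ω) (hΩ0 : Ω 0 = 0) (hc : 0 < c) (hq : 0 ≤ q)
    (hgrad : ∀ y ∈ D, c * ‖y‖ ^ q ≤ ‖gradient Ω y‖) {x : E}
    (hD : closedBall 0 (2 * ‖x‖) ⊆ D) (hxU : x ∉ tubularNbhd D Ω Θ) :
    min (‖x‖ / 2) (Θ * c * (‖x‖ / 2) ^ q) ≤ infDist x {y | Ω y = 0} := by
  set Z := {y | Ω y = 0}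
  rcases le_or_gt (‖x‖ / 2) (infDist x Z) with hfar | hnear
  · exact min_le_of_left_le hfar
  obtain ⟨ξ, hξZ, hξ⟩ :=
    (isClosed_eq hΩ.continuous continuous_const).exists_infDist_eq_dist ⟨0, hΩ0⟩ x
  have hξ_lower : ‖x‖ / 2 ≤ ‖ξ‖ := by
    have := norm_sub_norm_le x ξ
    rw [← dist_eq_norm] at this
    linarith
  have hξD : ξ ∈ D := hD <| mem_closedBall_zero_iff.mpr <| by
    have := norm_sub_norm_le ξ x
    rw [← dist_eq_norm, dist_comm] at this
    linarith
  have hξ0 : ξ ≠ 0 := norm_pos_iff.mp <| by linarith [infDist_nonneg (x := x) (s := Z)]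
  have hgξ : c * ‖ξ‖ ^ q ≤ ‖gradient Ω ξ‖ := hgrad ξ hξD
  have hgξ0 : gradient Ω ξ ≠ 0 :=
    norm_pos_iff.mp (lt_of_lt_of_le (by have := norm_pos_iff.mpr hξ0; positivity) hgξ)
  obtain ⟨θ, hθ⟩ := exists_eq_add_smul_gradient_of_isMinOn_dist hΩ.contDiffAt hgξ0
    fun y hy => by
      rw [mem_ofPred_eq, ← hξ]
      exact infDist_le_dist_of_mem (show y ∈ Z from hy.trans hξZ)
  have hΘθ : Θ ≤ |θ| := not_lt.mp fun hθΘ =>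
    hxU ⟨hD (mem_closedBall_zero_iff.mpr (by linarith [norm_nonneg x])), ξ, ⟨⟨hξD, hξZ⟩, hξ0⟩,
      θ, hθΘ, hθ⟩
  have hdist : dist x ξ = |θ| * ‖gradient Ω ξ‖ := by
    rw [hθ, dist_eq_norm, add_sub_cancel_left, norm_smul, Real.norm_eq_abs]
  refine min_le_of_right_le ?_
  calc Θ * c * (‖x‖ / 2) ^ q ≤ |θ| * (c * (‖x‖ / 2) ^ q) := by
        rw [mul_assoc]; exact mul_le_mul_of_nonneg_right hΘθ (by positivity)
    _ ≤ |θ| * ‖gradient Ω ξ‖ := by gcongr; exact le_trans (by gcongr) hgξ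
    _ = infDist x Z := by rw [hξ, hdist]

theorem omega_lower_bound_outside_tubular_general {d : ℕ} (q : ℝ) (hq : 1 ≤ q)
    (D : Set (EuclideanSpace ℝ (Fin d))) (hDball : D ⊆ ball 0 1)
    (Ω : EuclideanSpace ℝ (Fin d) → ℝ) (hΩ : ContDiff ℝ 5 Ω)
    (hΩ0 : Ω 0 = 0)
    (c : ℝ) (hc : 0 < c)
    (hgrad : ∀ x ∈ D, c * ‖x‖ ^ q ≤ ‖gradient Ω x‖)
    (Θ : ℝ) (hΘ : Θ ∈ Set.Ioc (0 : ℝ) 1)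
    (s : ℝ) (h2s : closedBall 0 (2 * s) ⊆ D) :
    ∃ C > 0, ∀ x ∈ ball 0 s \
        {z ∈ D | ∃ ξ ∈ ({y ∈ D | Ω y = 0} \ {0}), ∃ θ : ℝ, |θ| < Θ ∧
          z = ξ + θ • gradient Ω ξ},
      C * ‖x‖ ^ (2 * q) ≤ |Ω x| := by
  have hΘ0 : 0 < Θ := hΘ.1
  refine ⟨c * min 1 (Θ * c) / 2 ^ (2 * q), by positivity, ?_⟩
  rintro x ⟨hxs, hxU⟩
  rcases eq_or_ne x 0 with rfl | hx0
  · simp [Real.zero_rpow (by positivity : 2 * q ≠ 0)]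
  have hD : closedBall 0 (2 * ‖x‖) ⊆ D :=
    (closedBall_subset_closedBall (by linarith [mem_ball_zero_iff.mp hxs])).trans h2s
  have hx1 : ‖x‖ < 1 := mem_ball_zero_iff.mp
    (hDball (hD (mem_closedBall_zero_iff.mpr (by linarith [norm_nonneg x]))))
  have hx : 0 < ‖x‖ / 2 := by have := norm_pos_iff.mpr hx0; positivity
  have hρ := min_le_infDist_of_notMem_tubularNbhd (hΩ.of_le (by norm_num)) hΩ0 hc
    (by linarith) hgrad hD hxU
  have hΩx := mul_le_abs_of_le_infDist (hΩ.differentiable (by norm_num)) (by positivity)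
    (by positivity) hρ fun y hy => mul_half_norm_rpow_le_of_mem_ball hc.le (by linarith) hgrad hD
      (ball_subset_ball (min_le_left _ _) hy)
  have hpow : (‖x‖ / 2) ^ q * (‖x‖ / 2) ^ q = ‖x‖ ^ (2 * q) / 2 ^ (2 * q) := by
    rw [← Real.rpow_add hx, ← two_mul, Real.div_rpow (norm_nonneg x) zero_le_two]
  calc c * min 1 (Θ * c) / 2 ^ (2 * q) * ‖x‖ ^ (2 * q)
      = c * (‖x‖ / 2) ^ q * (min 1 (Θ * c) * (‖x‖ / 2) ^ q) := by
        rw [mul_mul_mul_comm, mul_comm ((‖x‖ / 2) ^ q), hpow]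
        ring
    _ ≤ c * (‖x‖ / 2) ^ q * min (‖x‖ / 2) (Θ * c * (‖x‖ / 2) ^ q) := by
        gcongr; exact min_one_mul_rpow_le_min hx.le (by linarith) hq
    _ ≤ |Ω x| := hΩx

/-- Let `s > 0` be so small that the closed ball `B_{2s}` is contained in `D`. Then there
is `C > 0` such that `|Ω(x)| ≥ C |x|^{2q}` uniformly for `x ∈ B_s \ U_Θ(Σ₀)`, where
`U_Θ(Σ₀) = {x_ξ + θ ∇Ω(x_ξ) ∈ D : x_ξ ∈ Σ₀, |θ| < Θ}`. -/
theorem omega_lower_bound_outside_tubular {d : ℕ} (q : ℝ) (hq : 1 ≤ q)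
    (D : Set (EuclideanSpace ℝ (Fin d))) (hD : IsOpen D) (hDball : D ⊆ ball 0 1)
    (Ω : EuclideanSpace ℝ (Fin d) → ℝ) (hΩ : ContDiff ℝ 5 Ω)
    (h0D : (0 : EuclideanSpace ℝ (Fin d)) ∈ D) (hΩ0 : Ω 0 = 0)
    (hcrit0 : gradient Ω 0 = 0)
    (hcrit : ∀ x ∈ D, Ω x = 0 → gradient Ω x = 0 → x = 0)
    (c : ℝ) (hc : 0 < c)
    (hgrad : ∀ x ∈ D, c * ‖x‖ ^ q ≤ ‖gradient Ω x‖)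
    (hdist : ∀ x ∈ D,
      EMetric.infEdist x {y | Ω y = 0} <
        EMetric.infEdist x ({y | Ω y = 0} ∩ frontier D))
    (Θ : ℝ) (hΘ : Θ ∈ Set.Ioc (0 : ℝ) 1)
    (hinj : ∀ x₁ ∈ ({y ∈ D | Ω y = 0} \ {0}), ∀ x₂ ∈ ({y ∈ D | Ω y = 0} \ {0}),
      ∀ θ₁ θ₂ : ℝ, |θ₁| ≤ Θ → |θ₂| ≤ Θ →
        x₁ + θ₁ • gradient Ω x₁ = x₂ + θ₂ • gradient Ω x₂ → x₁ = x₂ ∧ θ₁ = θ₂)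
    (s : ℝ) (hs : 0 < s) (h2s : closedBall 0 (2 * s) ⊆ D) :
    ∃ C > 0, ∀ x ∈ ball 0 s \
        {z ∈ D | ∃ ξ ∈ ({y ∈ D | Ω y = 0} \ {0}), ∃ θ : ℝ, |θ| < Θ ∧
          z = ξ + θ • gradient Ω ξ},
      C * ‖x‖ ^ (2 * q) ≤ |Ω x| :=
  omega_lower_bound_outside_tubular_general q hq D hDball Ω hΩ hΩ0 c hc hgrad Θ hΘ s h2s
end

section
/- Let $a < 0 < b$ and let $\Phi : [a,b] \to \mathbb{R}$ be $C^2$-smooth. Then there exists a constant $C$, depending only on $a$, $b$, and the $C^2$ norm of $\Phi$ on $[a,b]$ (in particular independent of $\varepsilon$ and $\rho$), such that for all $\varepsilon \in (0,1]$ and all $\rho \in \mathbb{R}$, $\Big| \int_a^b \frac{(\Phi(u) - \Phi(0))\, \cos(\rho\, \varepsilon^{-1} u)}{u^2 + \varepsilon^2}\, du \Big| \leq C$. -/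
open Real Set MeasureTheory

/-!
Write `Φ u - Φ 0 = A u + R u` with `|R u| ≤ L u²`. Since `u² / (u² + ε²) ≤ 1`, the remainder
contributes at most `L (b - a)`. The kernel `u cos (θ u) / (u² + ε²)` of the linear part is odd,
so it integrates to zero over `[-m, m]` with `m = min (-a) b`, and outside that interval it is
bounded by `1 / m`; neither bound depends on `θ` or `ε`.
-/

theorem Function.Odd.integral_neg_self_eq_zero {E : Type*} [NormedAddCommGroup E]
    [NormedSpace ℝ E] {g : ℝ → E} (hg : Function.Odd g) (m : ℝ) :
    ∫ x in -m..m, g x = 0 := by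
  have : IsAddTorsionFree E := .of_isTorsionFree ℝ E
  have h := intervalIntegral.integral_comp_neg (a := -m) (b := m) g
  simp only [hg _, intervalIntegral.integral_neg, neg_neg] at h
  exact self_eq_neg.mp h.symm

theorem Function.Odd.norm_integral_le {E : Type*} [NormedAddCommGroup E] [NormedSpace ℝ E]
    {g : ℝ → E} (hodd : Function.Odd g) (hg : Continuous g) {a b m K : ℝ} (hm : 0 ≤ m)
    (ham : a ≤ -m) (hmb : m ≤ b) (hK : ∀ x, m ≤ |x| → ‖g x‖ ≤ K) :
    ‖∫ x in a..b, g x‖ ≤ K * (b - a - 2 * m) := by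
  have hint (p q : ℝ) : IntervalIntegrable g volume p q := hg.intervalIntegrable p q
  have hsplit : ∫ x in a..b, g x = (∫ x in a..-m, g x) + ∫ x in m..b, g x := by
    rw [← intervalIntegral.integral_add_adjacent_intervals (hint a (-m)) (hint (-m) b),
      ← intervalIntegral.integral_add_adjacent_intervals (hint (-m) m) (hint m b),
      hodd.integral_neg_self_eq_zero, zero_add]
  have hleft : ‖∫ x in a..-m, g x‖ ≤ K * (-m - a) := by
    refine (intervalIntegral.norm_integral_le_of_norm_le_const fun x hx => hK x ?_).trans_eq
      (by rw [abs_of_nonneg (by linarith)])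
    rw [uIoc_of_le ham] at hx
    rw [abs_of_nonpos (by linarith [hx.2])]
    linarith [hx.2]
  have hright : ‖∫ x in m..b, g x‖ ≤ K * (b - m) := by
    refine (intervalIntegral.norm_integral_le_of_norm_le_const fun x hx => hK x ?_).trans_eq
      (by rw [abs_of_nonneg (by linarith)])
    rw [uIoc_of_le hmb] at hx
    rw [abs_of_nonneg (by linarith [hx.1])]
    exact hx.1.le
  calc ‖∫ x in a..b, g x‖ ≤ K * (-m - a) + K * (b - m) :=
        hsplit ▸ (norm_add_le _ _).trans (add_le_add hleft hright)
    _ = K * (b - a - 2 * m) := by ring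

theorem abs_mul_cos_div_sq_add_sq_le (θ ε : ℝ) {u : ℝ} (hu : u ≠ 0) :
    |u * cos (θ * u) / (u ^ 2 + ε ^ 2)| ≤ |u|⁻¹ := by
  have hu2 : 0 < u ^ 2 := by positivity
  calc |u * cos (θ * u) / (u ^ 2 + ε ^ 2)| = |u| * |cos (θ * u)| / (u ^ 2 + ε ^ 2) := by
        rw [abs_div, abs_mul, abs_of_pos (by positivity : 0 < u ^ 2 + ε ^ 2)]
    _ ≤ |u| * 1 / u ^ 2 := by
        gcongr
        · exact abs_cos_le_one _
        · exact le_add_of_nonneg_right (sq_nonneg ε)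
    _ = |u|⁻¹ := by rw [mul_one, ← sq_abs]; field_simp

theorem abs_integral_id_mul_cos_div_sq_add_sq_le {a b m : ℝ} (hm : 0 < m) (ham : a ≤ -m)
    (hmb : m ≤ b) (θ : ℝ) {ε : ℝ} (hε : ε ≠ 0) :
    |∫ u in a..b, u * cos (θ * u) / (u ^ 2 + ε ^ 2)| ≤ m⁻¹ * (b - a - 2 * m) := by
  have hodd : Function.Odd fun u => u * cos (θ * u) / (u ^ 2 + ε ^ 2) := fun u => by
    simp only [mul_neg, cos_neg, neg_sq, neg_mul, neg_div]
  exact hodd.norm_integral_le (by fun_prop (disch := intro; positivity)) hm.le ham hmb fun u hu =>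
    (abs_mul_cos_div_sq_add_sq_le θ ε (abs_pos.mp (hm.trans_le hu))).trans (inv_anti₀ hm hu)

theorem integral_mul_cos_div_sq_add_sq_eq_add {f : ℝ → ℝ} {a b : ℝ}
    (hf : ContinuousOn f (uIcc a b)) (A θ : ℝ) {ε : ℝ} (hε : ε ≠ 0) :
    ∫ u in a..b, f u * cos (θ * u) / (u ^ 2 + ε ^ 2) =
      A * (∫ u in a..b, u * cos (θ * u) / (u ^ 2 + ε ^ 2)) +
        ∫ u in a..b, (f u - A * u) * cos (θ * u) / (u ^ 2 + ε ^ 2) := by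
  have hden (u : ℝ) : u ^ 2 + ε ^ 2 ≠ 0 := by positivity
  have hlin : IntervalIntegrable (fun u => A * (u * cos (θ * u) / (u ^ 2 + ε ^ 2))) volume a b :=
    (by fun_prop (disch := exact hden _) : Continuous _).intervalIntegrable _ _
  have hrem : IntervalIntegrable
      (fun u => (f u - A * u) * cos (θ * u) / (u ^ 2 + ε ^ 2)) volume a b :=
    (ContinuousOn.div (by fun_prop) (by fun_prop) fun u _ => hden u).intervalIntegrable
  rw [← intervalIntegral.integral_const_mul, ← intervalIntegral.integral_add hlin hrem]
  congr 1 with u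
  ring

theorem abs_integral_mul_cos_div_sq_add_sq_le {r : ℝ → ℝ} {a b L : ℝ} (hab : a ≤ b)
    (hL : 0 ≤ L) (hr : ∀ u ∈ Icc a b, |r u| ≤ L * u ^ 2) (θ ε : ℝ) :
    |∫ u in a..b, r u * cos (θ * u) / (u ^ 2 + ε ^ 2)| ≤ L * (b - a) := by
  rw [← Real.norm_eq_abs, ← abs_of_nonneg (sub_nonneg.mpr hab)]
  refine intervalIntegral.norm_integral_le_of_norm_le_const fun u hu => ?_
  rw [uIoc_of_le hab] at hu
  have hden : 0 ≤ u ^ 2 + ε ^ 2 := by positivity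
  calc ‖r u * cos (θ * u) / (u ^ 2 + ε ^ 2)‖ ≤ L * u ^ 2 * 1 / (u ^ 2 + ε ^ 2) := by
        rw [norm_div, norm_mul, Real.norm_of_nonneg hden]
        gcongr
        · exact hr u (Ioc_subset_Icc_self hu)
        · exact abs_cos_le_one _
    _ ≤ L := div_le_of_le_mul₀ hden hL (by nlinarith [sq_nonneg ε])

theorem Convex.abs_sub_sub_mul_le_sq {f f' : ℝ → ℝ} {s : Set ℝ} (hs : Convex ℝ s)
    {c L u : ℝ} (hc : c ∈ s) (hu : u ∈ s) (hL : 0 ≤ L) (hf : ∀ x ∈ s, HasDerivWithinAt f (f' x) s x)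
    (hf' : ∀ x ∈ s, |f' x - f' c| ≤ L * |x - c|) :
    |f u - f c - f' c * (u - c)| ≤ L * (u - c) ^ 2 := by
  have hseg : uIcc c u ⊆ s := hs.ordConnected.uIcc_subset hc hu
  have hg : ∀ x ∈ uIcc c u,
      HasDerivWithinAt (fun y => f y - f' c * y) (f' x - f' c) (uIcc c u) x := fun x hx =>
    ((hf x (hseg hx)).mono hseg).sub (((hasDerivWithinAt_id x _).const_mul (f' c)).congr_deriv
      (mul_one _))
  have hg' : ∀ x ∈ uIcc c u, ‖f' x - f' c‖ ≤ L * |u - c| := fun x hx =>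
    (hf' x (hseg hx)).trans (mul_le_mul_of_nonneg_left (abs_sub_left_of_mem_uIcc hx) hL)
  have := (convex_uIcc c u).norm_image_sub_le_of_norm_hasDerivWithin_le hg hg'
    left_mem_uIcc right_mem_uIcc
  rw [Real.norm_eq_abs, Real.norm_eq_abs, mul_assoc, abs_mul_abs_self, ← sq] at this
  calc |f u - f c - f' c * (u - c)| = |f u - f' c * u - (f c - f' c * c)| := by ring_nf
    _ ≤ L * (u - c) ^ 2 := this

theorem ContDiffOn.exists_abs_sub_sub_mul_le_sq {f : ℝ → ℝ} {s : Set ℝ}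
    (hf : ContDiffOn ℝ 2 f s) (hs : Convex ℝ s) (hsc : IsCompact s) (hsu : UniqueDiffOn ℝ s)
    {c : ℝ} (hc : c ∈ s) :
    ∃ A L : ℝ, 0 ≤ L ∧ ∀ u ∈ s, |f u - f c - A * (u - c)| ≤ L * (u - c) ^ 2 := by
  set f' := derivWithin f s
  have hf' : ContDiffOn ℝ 1 f' s := hf.derivWithin hsu (by norm_num)
  obtain ⟨L, hL⟩ := hsc.exists_bound_of_continuousOn (hf'.continuousOn_derivWithin hsu le_rfl)
  have hlip : ∀ x ∈ s, |f' x - f' c| ≤ max L 0 * |x - c| := fun x hx =>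
    hs.norm_image_sub_le_of_norm_hasDerivWithin_le
      (fun y hy => ((hf'.differentiableOn one_ne_zero) y hy).hasDerivWithinAt)
      (fun y hy => (hL y hy).trans (le_max_left _ _)) hc hx
  exact ⟨f' c, max L 0, le_max_right _ _, fun u hu => hs.abs_sub_sub_mul_le_sq hc hu
    (le_max_right _ _) (fun x hx => ((hf.differentiableOn two_ne_zero) x hx).hasDerivWithinAt)
    hlip⟩

/-- Let `a < 0 < b` and `Φ : [a,b] → ℝ` be `C²`. Then there is a constant `C`
(independent of `ε` and `ρ`) such that for all `ε ∈ (0,1]` and all `ρ : ℝ`,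
`|∫_a^b (Φ(u) − Φ(0)) cos(ρ ε⁻¹ u)/(u² + ε²) du| ≤ C`. -/
theorem integral_difference_uniform_bound (a b : ℝ) (ha : a < 0) (hb : 0 < b)
    (Φ : ℝ → ℝ) (hΦ : ContDiffOn ℝ 2 Φ (Set.Icc a b)) :
    ∃ C : ℝ, ∀ ε ∈ Set.Ioc (0 : ℝ) 1, ∀ ρ : ℝ,
      |∫ u in a..b, (Φ u - Φ 0) * Real.cos (ρ * ε⁻¹ * u) / (u ^ 2 + ε ^ 2)| ≤ C := by
  have hab : a ≤ b := (ha.trans hb).le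
  obtain ⟨A, L, hL, hTaylor⟩ := hΦ.exists_abs_sub_sub_mul_le_sq (convex_Icc a b) isCompact_Icc
    (uniqueDiffOn_Icc (ha.trans hb)) ⟨ha.le, hb.le⟩
  set m := min (-a) b
  have hm : 0 < m := lt_min (neg_pos.mpr ha) hb
  refine ⟨|A| * (m⁻¹ * (b - a - 2 * m)) + L * (b - a), fun ε hε ρ => ?_⟩
  have hΦc : ContinuousOn (fun u => Φ u - Φ 0) (uIcc a b) := by
    rw [uIcc_of_le hab]; exact hΦ.continuousOn.sub continuousOn_const
  have hlinear := abs_integral_id_mul_cos_div_sq_add_sq_le hm (le_neg.mpr (min_le_left _ _))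
    (min_le_right _ _) (ρ * ε⁻¹) hε.1.ne'
  have hremainder := abs_integral_mul_cos_div_sq_add_sq_le
    (r := fun u => Φ u - Φ 0 - A * u) hab hL (fun u hu => by simpa using hTaylor u hu) (ρ * ε⁻¹) ε
  rw [integral_mul_cos_div_sq_add_sq_eq_add hΦc A (ρ * ε⁻¹) hε.1.ne']
  calc _ ≤ |A| * |∫ u in a..b, u * cos (ρ * ε⁻¹ * u) / (u ^ 2 + ε ^ 2)| +
        |∫ u in a..b, (Φ u - Φ 0 - A * u) * cos (ρ * ε⁻¹ * u) / (u ^ 2 + ε ^ 2)| :=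
        (abs_add_le _ _).trans_eq (by rw [abs_mul])
    _ ≤ _ := by gcongr
end

section
/- Let $n \geq 1$, $m > 0$, $\lambda^*(y) = \sum_{i=1}^n \sin^2(y^i/2) + m$ on $\mathbb{T}^n$, and $\Omega_k(x,y) = \lambda^*(x) + \lambda^*(y) - \lambda^*(x+y-k) - \lambda^*(k)$. Then for every $k \in \mathbb{T}^n$, the point $(x,y) = (k,k)$ is a critical point of $\Omega_k$, and the determinant of the Hessian of $\Omega_k$ at $(k,k)$ equals $4^{-n} \prod_{i=1}^n (-\cos^2 k^i)$. In particular, if $k^i \equiv \pi/2 \pmod{\pi}$ for some index $i$, then $(k,k)$ is a degenerate critical point of $\Omega_k$. -/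
/-! With `f s = sin² (s / 2)`, so that `f' = sin / 2` and `f'' = cos / 2`, one has
`Ω_k(x, y) = Σᵢ (f xⁱ + f yⁱ − f zⁱ) + const` with `z = x + y − k`. At `(k, k)` also `z = k`, so
the gradient `(f' xⁱ − f' zⁱ, f' yⁱ − f' zⁱ)` vanishes and the Hessian is the block matrix
`[[0, D], [D, 0]]` with `D = diag (−cos kⁱ / 2)`; pairing each `xⁱ` with `yⁱ` makes it block
diagonal with `2 × 2` blocks of determinant `−cos² kⁱ / 4`. -/

open Real

/-- The dispersion relation `λ*(y) = Σᵢ sin²(yⁱ/2) + m`. -/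
noncomputable def lamStar (n : ℕ) (m : ℝ) (y : Fin n → ℝ) : ℝ :=
  (∑ i, Real.sin (y i / 2) ^ 2) + m

/-- `Ω_k(x, y) = λ*(x) + λ*(y) − λ*(x + y − k) − λ*(k)`, as a function of the combined
variable `w ∈ ℝ^{2n}` with `xⁱ = w (inl i)`, `yⁱ = w (inr i)`. -/
noncomputable def OmegaK (n : ℕ) (m : ℝ) (k : Fin n → ℝ)
    (w : EuclideanSpace ℝ (Fin n ⊕ Fin n)) : ℝ :=
  lamStar n m (fun i => w (Sum.inl i)) + lamStar n m (fun i => w (Sum.inr i))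
    - lamStar n m (fun i => w (Sum.inl i) + w (Sum.inr i) - k i) - lamStar n m k

/-- The Hessian of `Ω_k` at `w`, as the `2n × 2n` matrix of second partial derivatives. -/
noncomputable def hessOmegaK (n : ℕ) (m : ℝ) (k : Fin n → ℝ)
    (w : EuclideanSpace ℝ (Fin n ⊕ Fin n)) :
    Matrix (Fin n ⊕ Fin n) (Fin n ⊕ Fin n) ℝ :=
  fun a b =>
    fderiv ℝ (fun v => fderiv ℝ (OmegaK n m k) v (EuclideanSpace.single b (1 : ℝ))) w
      (EuclideanSpace.single a (1 : ℝ))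

/-- The point `(x, y) = (k, k)` viewed as an element of `ℝ^{2n}`. -/
noncomputable def diagPoint (n : ℕ) (k : Fin n → ℝ) : EuclideanSpace ℝ (Fin n ⊕ Fin n) :=
  (WithLp.equiv 2 ((Fin n ⊕ Fin n) → ℝ)).symm (Sum.elim k k)

open Matrix

theorem Matrix.det_fromBlocks_diagonal {ι R : Type*} [Fintype ι] [DecidableEq ι] [CommRing R]
    (a b c d : ι → R) :
    (fromBlocks (diagonal a) (diagonal b) (diagonal c) (diagonal d)).det =
      ∏ i, (a i * d i - b i * c i) := by
  let e : Fin 2 × ι ≃ ι ⊕ ι :=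
    (finTwoEquiv.prodCongr (Equiv.refl ι)).trans (Equiv.boolProdEquivSum ι)
  have hblock : (fromBlocks (diagonal a) (diagonal b) (diagonal c) (diagonal d)).submatrix e e =
      blockDiagonal fun i => !![a i, b i; c i, d i] := by
    ext ⟨p, i⟩ ⟨q, j⟩
    fin_cases p <;> fin_cases q <;> by_cases hij : i = j <;>
      simp [e, finTwoEquiv, blockDiagonal_apply, hij]
  rw [← det_submatrix_equiv_self e, hblock, det_blockDiagonal]
  simp [det_fin_two_of]

theorem hasDerivAt_sin_half_sq (t : ℝ) :
    HasDerivAt (fun s => sin (s / 2) ^ 2) (sin t / 2) t := by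
  refine (((hasDerivAt_id t).div_const 2).sin.fun_pow 2).congr_deriv ?_
  have hsin : sin t = 2 * sin (t / 2) * cos (t / 2) := by rw [← sin_two_mul]; ring_nf
  rw [hsin, id]
  ring

namespace OmegaK

variable {n : ℕ}

noncomputable def sumCoord (i : Fin n) : EuclideanSpace ℝ (Fin n ⊕ Fin n) →L[ℝ] ℝ :=
  EuclideanSpace.proj (Sum.inl i) + EuclideanSpace.proj (Sum.inr i)

theorem sumCoord_single (i : Fin n) (b : Fin n ⊕ Fin n) :
    sumCoord i (EuclideanSpace.single b 1) = if Sum.elim id id b = i then 1 else 0 := by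
  cases b <;> simp [sumCoord, PiLp.single_apply, eq_comm]

noncomputable def grad (k : Fin n → ℝ) (w : EuclideanSpace ℝ (Fin n ⊕ Fin n)) :
    EuclideanSpace ℝ (Fin n ⊕ Fin n) →L[ℝ] ℝ :=
  ∑ a, (sin (w a) / 2) • EuclideanSpace.proj a - ∑ i, (sin (sumCoord i w - k i) / 2) • sumCoord i

theorem omegaK_eq (m : ℝ) (k : Fin n → ℝ) :
    OmegaK n m k = fun w => ∑ a, sin (w a / 2) ^ 2 - ∑ i, sin ((sumCoord i w - k i) / 2) ^ 2
      + (m - lamStar n m k) := by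
  ext w
  simp [OmegaK, lamStar, Fintype.sum_sum_type, sumCoord]
  ring

theorem hasFDerivAt_omegaK (m : ℝ) (k : Fin n → ℝ) (w : EuclideanSpace ℝ (Fin n ⊕ Fin n)) :
    HasFDerivAt (OmegaK n m k) (grad k w) w := by
  rw [omegaK_eq]
  refine (HasFDerivAt.sub (.fun_sum fun a _ => ?_) (.fun_sum fun i _ => ?_)).add_const _
  · exact (hasDerivAt_sin_half_sq _).comp_hasFDerivAt w
      (EuclideanSpace.proj (𝕜 := ℝ) (ι := Fin n ⊕ Fin n) a).hasFDerivAt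
  · exact (hasDerivAt_sin_half_sq _).comp_hasFDerivAt w
      ((sumCoord i).hasFDerivAt.sub_const (k i))

theorem fderiv_omegaK_diagPoint (m : ℝ) (k : Fin n → ℝ) :
    fderiv ℝ (OmegaK n m k) (diagPoint n k) = 0 := by
  rw [(hasFDerivAt_omegaK m k _).fderiv, grad, sub_eq_zero, Fintype.sum_sum_type]
  simp [sumCoord, diagPoint, Finset.sum_add_distrib]

theorem fderiv_omegaK_single (m : ℝ) (k : Fin n → ℝ) (w : EuclideanSpace ℝ (Fin n ⊕ Fin n))
    (b : Fin n ⊕ Fin n) :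
    fderiv ℝ (OmegaK n m k) w (EuclideanSpace.single b 1) =
      sin (w b) / 2 - sin (sumCoord (Sum.elim id id b) w - k (Sum.elim id id b)) / 2 := by
  simp [(hasFDerivAt_omegaK m k w).fderiv, grad, sumCoord_single, PiLp.single_apply,
    -Fintype.sum_sum_type]

theorem hessOmegaK_apply (m : ℝ) (k : Fin n → ℝ) (w : EuclideanSpace ℝ (Fin n ⊕ Fin n))
    (a b : Fin n ⊕ Fin n) :
    hessOmegaK n m k w a b =
      (if a = b then cos (w b) / 2 else 0) -
        if Sum.elim id id a = Sum.elim id id b then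
          cos (sumCoord (Sum.elim id id b) w - k (Sum.elim id id b)) / 2 else 0 := by
  set i := Sum.elim id id b
  have hpartial : HasFDerivAt (fun v => fderiv ℝ (OmegaK n m k) v (EuclideanSpace.single b 1))
      ((cos (w b) / 2) • EuclideanSpace.proj b - (cos (sumCoord i w - k i) / 2) • sumCoord i)
      w := by
    simp only [fderiv_omegaK_single]
    exact (((hasDerivAt_sin _).div_const 2).comp_hasFDerivAt w
        (EuclideanSpace.proj (𝕜 := ℝ) (ι := Fin n ⊕ Fin n) b).hasFDerivAt).sub
      (((hasDerivAt_sin _).div_const 2).comp_hasFDerivAt w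
        ((sumCoord i).hasFDerivAt.sub_const (k i)))
  simp [hessOmegaK, hpartial.fderiv, sumCoord_single, PiLp.single_apply, eq_comm]

theorem hessOmegaK_diagPoint (m : ℝ) (k : Fin n → ℝ) :
    hessOmegaK n m k (diagPoint n k) =
      fromBlocks 0 (diagonal fun i => -(cos (k i) / 2))
        (diagonal fun i => -(cos (k i) / 2)) 0 := by
  ext (i | i) (j | j) <;>
    by_cases hij : i = j <;> simp [hessOmegaK_apply, diagPoint, sumCoord, hij]

end OmegaK

open OmegaK in
theorem diag_critical_and_degenerate_general (n : ℕ) (m : ℝ)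
    (k : Fin n → ℝ) :
    fderiv ℝ (OmegaK n m k) (diagPoint n k) = 0 ∧
    (hessOmegaK n m k (diagPoint n k)).det =
      ((4 : ℝ) ^ n)⁻¹ * ∏ i : Fin n, -(Real.cos (k i)) ^ 2 ∧
    ((∃ i : Fin n, ∃ j : ℤ, k i = π / 2 + π * j) →
      (hessOmegaK n m k (diagPoint n k)).det = 0) := by
  have hdet : (hessOmegaK n m k (diagPoint n k)).det =
      ((4 : ℝ) ^ n)⁻¹ * ∏ i : Fin n, -(Real.cos (k i)) ^ 2 := by
    rw [hessOmegaK_diagPoint, ← diagonal_zero, det_fromBlocks_diagonal, ← inv_pow,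
      ← Fin.prod_const, ← Finset.prod_mul_distrib]
    exact Finset.prod_congr rfl fun i _ => by ring
  refine ⟨fderiv_omegaK_diagPoint m k, hdet, ?_⟩
  rintro ⟨i, j, hki⟩
  have hcos : cos (k i) = 0 := by
    rw [hki, mul_comm, cos_add_int_mul_pi, cos_pi_div_two, mul_zero]
  rw [hdet, Finset.prod_eq_zero (Finset.mem_univ i) (by rw [hcos]; ring), mul_zero]

/-- For every `k`, the point `(k,k)` is a critical point of `Ω_k`, and the determinant of
the Hessian there equals `4⁻ⁿ ∏ᵢ (−cos² kⁱ)`. In particular, if `kⁱ ≡ π/2 (mod π)` for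
some `i`, then `(k,k)` is a degenerate critical point. -/
theorem diag_critical_and_degenerate (n : ℕ) (hn : 1 ≤ n) (m : ℝ) (hm : 0 < m)
    (k : Fin n → ℝ) :
    fderiv ℝ (OmegaK n m k) (diagPoint n k) = 0 ∧
    (hessOmegaK n m k (diagPoint n k)).det =
      ((4 : ℝ) ^ n)⁻¹ * ∏ i : Fin n, -(Real.cos (k i)) ^ 2 ∧
    ((∃ i : Fin n, ∃ j : ℤ, k i = π / 2 + π * j) →
      (hessOmegaK n m k (diagPoint n k)).det = 0) :=
  diag_critical_and_degenerate_general n m k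
end
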